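/- In the upper half-plane model of ℍ², suppose γ(z) = e^{-l} z with l > 0, and let L₁ be the geodesic with endpoints c, d on the real axis where 0 < c < d. If the hyperbolic distance from L₁ to the geodesic L₂ = {z : Re z = 0} (the imaginary axis) equals m > 0 and γ(c) = 1 (so c = e^l), then d = e^l · coth²(m/2). -/
import Mathlib


/- STATEMENT 1: In the upper half-plane, let γ(z) = e^{-l} z with l > 0 and let L₁ be the
geodesic (semicircle) with endpoints c, d on the real axis, 0 < c < d, and L₂ the imaginary
axis.  If the hyperbolic distance from L₁ to L₂ equals m > 0 and γ(c) = 1 (i.e. c = e^l),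
then d = e^l · coth²(m/2). -/

open Set Real

local notation "ℍ" => UpperHalfPlane

/-- The geodesic of the upper half-plane which is the Euclidean semicircle
with endpoints `a < b` on the real axis. -/
def Semicircle (a b : ℝ) : Set UpperHalfPlane :=
  {z | (z.re - (a + b) / 2) ^ 2 + z.im ^ 2 = ((b - a) / 2) ^ 2}

/-- The imaginary axis, as a geodesic of the upper half-plane. -/
def ImaginaryAxis : Set UpperHalfPlane := {z | z.re = 0}



lemma cosh_dist_eq (p q : ℍ) :
    Real.cosh (dist p q) = 1 + ((p.re - q.re)^2 + (p.im - q.im)^2) / (2 * p.im * q.im) := by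
  rw [UpperHalfPlane.cosh_dist, Complex.dist_eq_re_im, Real.sq_sqrt (by positivity)]
  simp

lemma key_lb (c d x y t : ℝ) (hc : 0 < c) (hcd : c < d) (hy : 0 < y) (ht : 0 < t)
    (hmem : (x - (c+d)/2)^2 + y^2 = ((d-c)/2)^2) :
    (c+d)/(d-c) ≤ 1 + ((x - 0)^2 + (y - t)^2) / (2*y*t) := by
  have h2 : (0:ℝ) < 2*y*t := by positivity
  have hρ : (0:ℝ) < (d-c)/2 := by linarith
  have hr : (0:ℝ) < (c+d)/2 := by linarith
  rw [show (1:ℝ) + ((x-0)^2+(y-t)^2)/(2*y*t) = (2*y*t + ((x-0)^2+(y-t)^2))/(2*y*t) by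
        field_simp]
  rw [div_le_div_iff₀ (by linarith) h2]
  have key : 2*t*y*((c+d)/2) ≤ (x^2+y^2+t^2)*((d-c)/2) := by
    have hid : ((x^2+y^2+t^2)*((d-c)/2))^2 - (2*t*y*((c+d)/2))^2 =
        ((d-c)/2)^2*(x^2+y^2-t^2)^2 + 4*t^2*(((d-c)/2)^2 + ((c+d)/2)*(x-(c+d)/2))^2 := by
      linear_combination (4*t^2*(((d-c)/2)^2 - ((c+d)/2)^2)) * hmem
    have h1 : (2*t*y*((c+d)/2))^2 ≤ ((x^2+y^2+t^2)*((d-c)/2))^2 := by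
      nlinarith [sq_nonneg (x^2+y^2-t^2), sq_nonneg (((d-c)/2)^2 + ((c+d)/2)*(x-(c+d)/2)),
        sq_nonneg t, hid, mul_nonneg (sq_nonneg ((d-c)/2)) (sq_nonneg (x^2+y^2-t^2)),
        mul_nonneg (mul_nonneg (by norm_num : (0:ℝ) ≤ 4) (sq_nonneg t))
          (sq_nonneg (((d-c)/2)^2 + ((c+d)/2)*(x-(c+d)/2)))]
    have hA : (0:ℝ) ≤ (x^2+y^2+t^2)*((d-c)/2) := by positivity
    have hB : (0:ℝ) ≤ 2*t*y*((c+d)/2) := by positivity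
    nlinarith [h1, hA, hB]
  nlinarith [key]

set_option maxHeartbeats 1000000 in
theorem endpoint_formula_of_dist_to_imaginary_axis
    (l m c d : ℝ) (hl : 0 < l) (hm : 0 < m) (hc : 0 < c) (hcd : c < d)
    -- γ(c) = 1 for γ(z) = e^{-l} z, i.e. c = e^l :
    (hγc : Real.exp (-l) * c = 1)
    -- the hyperbolic distance from L₁ = Semicircle c d to L₂ = ImaginaryAxis equals m :
    (hlow : ∀ p ∈ Semicircle c d, ∀ q ∈ ImaginaryAxis, m ≤ dist p q)
    (hreal : ∃ p ∈ Semicircle c d, ∃ q ∈ ImaginaryAxis, dist p q = m) :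
    d = Real.exp l * (Real.cosh (m / 2) / Real.sinh (m / 2)) ^ 2 := by
  have hce : c = Real.exp l := by
    rw [Real.exp_neg] at hγc
    field_simp at hγc
    linarith [hγc]
  have hd0 : 0 < d := hc.trans hcd
  have hcd0 : (0:ℝ) < c + d := by linarith
  have hdc0 : (0:ℝ) < d - c := by linarith
  have hcdne : c + d ≠ 0 := ne_of_gt hcd0
  have hdcne : d - c ≠ 0 := ne_of_gt hdc0
  -- the optimal pair
  set t₀ : ℝ := Real.sqrt (c*d) with ht₀
  have ht2 : t₀^2 = c*d := Real.sq_sqrt (by positivity)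
  have ht0 : 0 < t₀ := Real.sqrt_pos.mpr (by positivity)
  set x₀ : ℝ := 2*c*d/(c+d) with hx₀
  set y₀ : ℝ := t₀ * ((d-c)/(c+d)) with hy₀
  have hy0 : 0 < y₀ := by
    apply mul_pos ht0
    exact div_pos hdc0 hcd0
  set p₀ : ℍ := UpperHalfPlane.mk ⟨x₀, y₀⟩ hy0 with hp₀
  set q₀ : ℍ := UpperHalfPlane.mk ⟨0, t₀⟩ ht0 with hq₀
  have hp₀re : p₀.re = x₀ := rfl
  have hp₀im : p₀.im = y₀ := rfl
  have hq₀re : q₀.re = 0 := rfl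
  have hq₀im : q₀.im = t₀ := rfl
  have hy2 : y₀^2 = c*d*((d-c)/(c+d))^2 := by
    rw [hy₀, mul_pow, ht2]
  have hyt : y₀*t₀ = c*d*((d-c)/(c+d)) := by
    rw [hy₀, show t₀ * ((d-c)/(c+d)) * t₀ = t₀^2 * ((d-c)/(c+d)) by ring, ht2]
  have hmemp : p₀ ∈ Semicircle c d := by
    show (p₀.re - (c + d) / 2) ^ 2 + p₀.im ^ 2 = ((d - c) / 2) ^ 2
    rw [hp₀re, hp₀im, hy2, hx₀]
    field_simp
    ring
  have hmemq : q₀ ∈ ImaginaryAxis := hq₀re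
  have hcosh : Real.cosh (dist p₀ q₀) = (c+d)/(d-c) := by
    rw [cosh_dist_eq, hp₀re, hp₀im, hq₀re, hq₀im]
    rw [show (x₀ - 0)^2 + (y₀ - t₀)^2 = x₀^2 + y₀^2 - 2*(y₀*t₀) + t₀^2 by ring,
      show 2*y₀*t₀ = 2*(y₀*t₀) by ring, hy2, ht2, hyt, hx₀]
    field_simp
    ring
  -- cosh m = (c+d)/(d-c)
  obtain ⟨p, hp, q, hq, hpq⟩ := hreal
  have hqre : q.re = 0 := hq
  have hpmem : (p.re - (c + d) / 2) ^ 2 + p.im ^ 2 = ((d - c) / 2) ^ 2 := hp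
  have hlb : (c+d)/(d-c) ≤ Real.cosh m := by
    rw [← hpq, cosh_dist_eq, hqre]
    exact key_lb c d p.re p.im q.im hc hcd p.im_pos q.im_pos hpmem
  have hub : Real.cosh m ≤ (c+d)/(d-c) := by
    rw [← hcosh]
    have h1 : m ≤ dist p₀ q₀ := hlow p₀ hmemp q₀ hmemq
    rw [Real.cosh_le_cosh, abs_of_pos hm, abs_of_nonneg dist_nonneg]
    exact h1
  have hcm : Real.cosh m = (c+d)/(d-c) := le_antisymm hub hlb
  -- final algebra
  have hS0 : 0 < Real.sinh (m/2) := Real.sinh_pos_iff.mpr (by linarith)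
  have hSne : Real.sinh (m/2) ≠ 0 := ne_of_gt hS0
  have hCS : Real.cosh (m/2)^2 = Real.sinh (m/2)^2 + 1 := Real.cosh_sq (m/2)
  have hm2 := Real.cosh_two_mul (m/2)
  rw [show 2*(m/2) = m by ring] at hm2
  have hd : (Real.cosh (m/2)^2 + Real.sinh (m/2)^2)*(d-c) = c + d := by
    rw [← hm2, hcm]
    field_simp
  have key : d * Real.sinh (m/2)^2 = c * Real.cosh (m/2)^2 := by linear_combination (1/2)*hd - ((c+d)/2)*hCS
  rw [← hce, div_pow]
  field_simp
  linear_combination key
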